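/- For z ∈ Ĩ_n and i ∈ ℤ, the Demazure conjugate satisfies: s_i ∘ z ∘ s_i = s_i z s_i if z(i) < z(i+1) and z s_i ≠ s_i z; s_i ∘ z ∘ s_i = z s_i if z(i) < z(i+1) and z s_i = s_i z; and s_i ∘ z ∘ s_i = z if z(i) > z(i+1). Moreover, when z(i) < z(i+1), z s_i = s_i z if and only if both i and i+1 are fixed points of z. -/

import Mathlib

open Finset

/-- `w` is an element of the affine symmetric group `S̃_n`: a bijection `ℤ → ℤ` with
`w (i + n) = w i + n` for all `i` and `∑_{i=1}^n w i = n (n+1)/2`. -/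
def IsAffine (n : ℕ) (w : Equiv.Perm ℤ) : Prop :=
  (∀ i : ℤ, w (i + n) = w i + n) ∧ ∑ i ∈ Finset.Icc (1 : ℤ) (n : ℤ), (w i - i) = 0

/-- The Coxeter length of `w ∈ S̃_n`: the number of inversions `(i, j)`, `i < j`,
`w i > w j`, counted up to the equivalence `(i,j) ∼ (i+n, j+n)` (representatives with
`i ∈ [n]`). -/
noncomputable def affLen (n : ℕ) (w : Equiv.Perm ℤ) : ℕ :=
  Nat.card {p : ℤ × ℤ // 1 ≤ p.1 ∧ p.1 ≤ (n : ℤ) ∧ p.1 < p.2 ∧ w p.2 < w p.1}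

/-- The absolute length of an involution `z ∈ Ĩ_n`: the number of 2-cycles
`(i, j)` with `i < j = z i`, counted up to the equivalence `(i,j) ∼ (i+n, j+n)`. -/
noncomputable def absLen (n : ℕ) (z : Equiv.Perm ℤ) : ℕ :=
  Nat.card {p : ℤ × ℤ // 1 ≤ p.1 ∧ p.1 ≤ (n : ℤ) ∧ p.1 < p.2 ∧ z p.1 = p.2}

/-- The underlying function of the reflection `t_{i j}`: it sends `i + m n ↦ j + m n` and
`j + m n ↦ i + m n` for all `m`, fixing everything else. -/
def tFun (n : ℕ) (i j x : ℤ) : ℤ :=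
  if (n : ℤ) ∣ x - i then x + (j - i) else if (n : ℤ) ∣ x - j then x - (j - i) else x

theorem tFun_comp (n : ℕ) (i j x : ℤ) : tFun n j i (tFun n i j x) = x := by
  unfold tFun
  by_cases h1 : (n : ℤ) ∣ x - i
  · rw [if_pos h1]
    have c1 : (n : ℤ) ∣ x + (j - i) - j := by
      have e : x + (j - i) - j = x - i := by ring
      rw [e]; exact h1
    rw [if_pos c1]; ring
  · rw [if_neg h1]
    by_cases h2 : (n : ℤ) ∣ x - j
    · rw [if_pos h2]
      have c1 : ¬ (n : ℤ) ∣ x - (j - i) - j := by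
        intro hc
        apply h1
        have e : x - i = 2 * (x - j) - (x - (j - i) - j) := by ring
        rw [e]
        exact dvd_sub (Dvd.dvd.mul_left h2 2) hc
      have c2 : (n : ℤ) ∣ x - (j - i) - i := by
        have e : x - (j - i) - i = x - j := by ring
        rw [e]; exact h2
      rw [if_neg c1, if_pos c2]; ring
    · simp only [if_neg h1, if_neg h2]

/-- The reflection `t_{i j} ∈ S̃_n`. -/
def tPerm (n : ℕ) (i j : ℤ) : Equiv.Perm ℤ :=
  ⟨tFun n i j, tFun n j i, fun x => tFun_comp n i j x, fun x => tFun_comp n j i x⟩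

/-- The simple generator `s_i = t_{i, i+1} ∈ S̃_n`. -/
def sPerm (n : ℕ) (i : ℤ) : Equiv.Perm ℤ := tPerm n i (i + 1)

/-- `D` is the Demazure (0-Hecke) product on the affine symmetric group `S̃_n`: the unique
associative product with `w ∘ s_i = w` if `ℓ(w s_i) < ℓ(w)` and `w ∘ s_i = w s_i` if
`ℓ(w s_i) > ℓ(w)`. -/
def IsDemazure (n : ℕ) (D : Equiv.Perm ℤ → Equiv.Perm ℤ → Equiv.Perm ℤ) : Prop :=
  (∀ u v w : Equiv.Perm ℤ, IsAffine n u → IsAffine n v → IsAffine n w →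
    D (D u v) w = D u (D v w)) ∧
  (∀ u v : Equiv.Perm ℤ, IsAffine n u → IsAffine n v → IsAffine n (D u v)) ∧
  (∀ w : Equiv.Perm ℤ, IsAffine n w → D w 1 = w ∧ D 1 w = w) ∧
  (∀ w : Equiv.Perm ℤ, IsAffine n w → ∀ i : ℤ,
    (affLen n (w * sPerm n i) < affLen n w → D w (sPerm n i) = w) ∧
    (affLen n w < affLen n (w * sPerm n i) → D w (sPerm n i) = w * sPerm n i))

/-- `w` is an atom of the involution `z ∈ Ĩ_n` (relative to the Demazure product `D`):
`w` has minimal length among all `v ∈ S̃_n` with `z = v⁻¹ ∘ v`. -/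
def IsAtomOf (n : ℕ) (D : Equiv.Perm ℤ → Equiv.Perm ℤ → Equiv.Perm ℤ)
    (z w : Equiv.Perm ℤ) : Prop :=
  IsAffine n w ∧ D w⁻¹ w = z ∧
    ∀ v : Equiv.Perm ℤ, IsAffine n v → D v⁻¹ v = z → affLen n w ≤ affLen n v

/-!
Multiplying by `s_j` on the right changes the number of inversions by exactly one: count the
inversions `(p, q)` with `p` in the window `[j, j + n)`, which `s_j` preserves (the count does
not depend on the window); then `s_j` creates or destroys just the pair `(j, j + 1)`. With the
right rule defining `∘` and associativity, induction on `ℓ(w)` yields the left rule: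
`s_a ∘ w = s_a w` if `w⁻¹ a < w⁻¹ (a + 1)` and `s_a ∘ w = w` otherwise. As `z⁻¹ = z`, this
computes `s_i ∘ z`, and the right rule then decides `(s_i ∘ z) ∘ s_i`. Finally, `s_i` reverses
`z i < z (i + 1)` only if `z (i + 1) = z i + 1` and `z i ≡ i (mod n)`; an involution commuting
with `x ↦ x + n` that maps `i` into its own residue class fixes `i`, and then `z` commutes
with `s_i`.
-/

open Equiv

def ShiftEquivariant (n : ℕ) (w : Perm ℤ) : Prop := ∀ x : ℤ, w (x + n) = w x + n

namespace ShiftEquivariant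

variable {n : ℕ} {u v w : Perm ℤ}

theorem periodic (hw : ShiftEquivariant n w) : Function.Periodic (fun x => w x - x) (n : ℤ) :=
  fun x => by show w (x + n) - (x + n) = w x - x; rw [hw]; ring

theorem apply_sub_apply_of_dvd (hw : ShiftEquivariant n w) {x y : ℤ} (h : (n : ℤ) ∣ x - y) :
    w x - w y = x - y := by
  obtain ⟨k, hk⟩ := h
  have : w (y + k * n) - (y + k * n) = w y - y := hw.periodic.int_mul k y
  rw [show x = y + k * n by linarith]
  linarith

theorem inv (hw : ShiftEquivariant n w) : ShiftEquivariant n w⁻¹ :=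
  fun x => w.injective (by rw [hw]; simp)

theorem mul (hu : ShiftEquivariant n u) (hv : ShiftEquivariant n v) :
    ShiftEquivariant n (u * v) :=
  fun x => by rw [Perm.mul_apply, Perm.mul_apply, hv, hu]

theorem dvd_apply_sub_apply_iff (hw : ShiftEquivariant n w) {x y : ℤ} :
    (n : ℤ) ∣ w x - w y ↔ (n : ℤ) ∣ x - y := by
  refine ⟨fun h => ?_, fun h => by rwa [hw.apply_sub_apply_of_dvd h]⟩
  have := hw.inv.apply_sub_apply_of_dvd h
  simp only [Perm.inv_def, Equiv.symm_apply_apply] at this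
  rwa [this]

theorem apply_eq_self_of_dvd (hw : ShiftEquivariant n w) (hinv : ∀ x, w (w x) = x) {x : ℤ}
    (h : (n : ℤ) ∣ w x - x) : w x = x := by
  have := hw.apply_sub_apply_of_dvd h
  rw [hinv] at this
  omega

theorem exists_abs_sub_le (hn : 0 < n) (hw : ShiftEquivariant n w) :
    ∃ C, ∀ x, |w x - x| ≤ C := by
  obtain ⟨C, hC⟩ := ((Set.finite_Ico (0 : ℤ) n).image fun x => |w x - x|).bddAbove
  refine ⟨C, fun x => ?_⟩
  obtain ⟨y, hy, hxy⟩ := (hw.periodic.comp abs).exists_mem_Ico₀ (by exact_mod_cast hn) x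
  exact hC ⟨y, hy, hxy.symm⟩

theorem toIcoMod_apply_toIcoMod (hp : (0 : ℤ) < n) (hw : ShiftEquivariant n w) (a b x : ℤ) :
    toIcoMod hp a (w (toIcoMod hp b x)) = toIcoMod hp a (w x) := by
  refine (toIcoMod_eq_toIcoMod hp).2 ⟨toIcoDiv hp b x, ?_⟩
  rw [hw.apply_sub_apply_of_dvd ⟨toIcoDiv hp b x, ?_⟩] <;>
    rw [self_sub_toIcoMod, smul_eq_mul]
  ring

theorem sum_comp {M : Type*} [AddCommMonoid M] (hn : 0 < n) (hv : ShiftEquivariant n v)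
    {g : ℤ → M} (hg : Function.Periodic g n) :
    ∑ i ∈ Finset.Icc 1 (n : ℤ), g (v i) = ∑ i ∈ Finset.Icc 1 (n : ℤ), g i := by
  have hp : (0 : ℤ) < n := by exact_mod_cast hn
  have hmem : ∀ x, toIcoMod hp 1 x ∈ Finset.Icc 1 (n : ℤ) := fun x => by
    have := toIcoMod_mem_Ico hp 1 x
    simp only [Set.mem_Ico, Finset.mem_Icc] at this ⊢
    omega
  have hfix : ∀ x ∈ Finset.Icc 1 (n : ℤ), toIcoMod hp 1 x = x := fun x hx => by
    rw [toIcoMod_eq_self]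
    simp only [Set.mem_Ico, Finset.mem_Icc] at hx ⊢
    omega
  refine Finset.sum_nbij' (fun i => toIcoMod hp 1 (v i)) (fun i => toIcoMod hp 1 (v⁻¹ i))
    (fun i _ => hmem _) (fun i _ => hmem _) (fun i hi => ?_) (fun i hi => ?_)
    (fun i _ => (hg.sub_zsmul_eq _).symm)
  · rw [hv.inv.toIcoMod_apply_toIcoMod, ← Perm.mul_apply, inv_mul_cancel, Perm.one_apply,
      hfix i hi]
  · rw [hv.toIcoMod_apply_toIcoMod, ← Perm.mul_apply, mul_inv_cancel, Perm.one_apply, hfix i hi]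

theorem mul_tPerm (hw : ShiftEquivariant n w) (i j : ℤ) :
    w * tPerm n i j = tPerm n (w i) (w j) * w := by
  ext x
  change w (tFun n i j x) = tFun n (w i) (w j) (w x)
  simp only [tFun, hw.dvd_apply_sub_apply_iff]
  split_ifs with hi hj
  · have := hw.apply_sub_apply_of_dvd hi
    have := hw.apply_sub_apply_of_dvd (x := x + (j - i)) (y := j)
      (by rwa [show x + (j - i) - j = x - i by ring])
    linarith
  · have := hw.apply_sub_apply_of_dvd hj
    have := hw.apply_sub_apply_of_dvd (x := x - (j - i)) (y := i)
      (by rwa [show x - (j - i) - i = x - j by ring])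
    linarith
  · rfl

end ShiftEquivariant

theorem shiftEquivariant_tPerm (n : ℕ) (i j : ℤ) : ShiftEquivariant n (tPerm n i j) := by
  intro x
  change tFun n i j (x + n) = tFun n i j x + n
  simp only [tFun, add_sub_right_comm x (n : ℤ), dvd_add_self_right]
  split_ifs <;> ring

theorem eq_of_mem_Ico_of_dvd_sub {n : ℕ} {a x : ℤ} (hx : x ∈ Set.Ico a (a + n))
    (h : (n : ℤ) ∣ x - a) : x = a := by
  rw [Set.mem_Ico] at hx
  have := Int.eq_zero_of_abs_lt_dvd h (abs_lt.2 ⟨by omega, by omega⟩)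
  omega

section SimpleReflection

variable {n : ℕ} {i x y : ℤ}

theorem shiftEquivariant_sPerm (n : ℕ) (i : ℤ) : ShiftEquivariant n (sPerm n i) :=
  shiftEquivariant_tPerm n i (i + 1)

theorem sPerm_apply (n : ℕ) (i x : ℤ) : sPerm n i x =
    if (n : ℤ) ∣ x - i then x + 1 else if (n : ℤ) ∣ x - (i + 1) then x - 1 else x := by
  change tFun n i (i + 1) x = _
  simp only [tFun, add_sub_cancel_left]

theorem sPerm_apply_of_dvd (h : (n : ℤ) ∣ x - i) : sPerm n i x = x + 1 := by
  rw [sPerm_apply, if_pos h]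

theorem not_dvd_sub_add_one_of_dvd (hn : 2 ≤ n) (h : (n : ℤ) ∣ x - i) :
    ¬ (n : ℤ) ∣ x - (i + 1) := fun h' => by
  have := Int.eq_zero_of_abs_lt_dvd (dvd_sub h h') (abs_lt.2 ⟨by omega, by omega⟩)
  omega

theorem sPerm_apply_of_dvd_succ (hn : 2 ≤ n) (h : (n : ℤ) ∣ x - (i + 1)) :
    sPerm n i x = x - 1 := by
  rw [sPerm_apply, if_neg fun hi => not_dvd_sub_add_one_of_dvd hn hi h, if_pos h]

theorem sPerm_apply_of_not_dvd (hi : ¬ (n : ℤ) ∣ x - i) (hi' : ¬ (n : ℤ) ∣ x - (i + 1)) :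
    sPerm n i x = x := by
  rw [sPerm_apply, if_neg hi, if_neg hi']

theorem sPerm_apply_self : sPerm n i i = i + 1 :=
  sPerm_apply_of_dvd (by simp)

theorem sPerm_apply_succ (hn : 2 ≤ n) : sPerm n i (i + 1) = i := by
  rw [sPerm_apply_of_dvd_succ hn (by simp), add_sub_cancel_right]

theorem sPerm_apply_mem_Icc (n : ℕ) (i x : ℤ) : sPerm n i x ∈ Set.Icc (x - 1) (x + 1) := by
  rw [sPerm_apply, Set.mem_Icc]
  split_ifs <;> omega

theorem sPerm_involutive (hn : 2 ≤ n) (i : ℤ) : Function.Involutive (sPerm n i) := by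
  intro x
  by_cases hi : (n : ℤ) ∣ x - i
  · rw [sPerm_apply_of_dvd hi, sPerm_apply_of_dvd_succ hn (by rwa [add_sub_add_right_eq_sub]),
      add_sub_cancel_right]
  by_cases hi' : (n : ℤ) ∣ x - (i + 1)
  · rw [sPerm_apply_of_dvd_succ hn hi', sPerm_apply_of_dvd (by rwa [sub_sub, add_comm 1 i]),
      sub_add_cancel]
  rw [sPerm_apply_of_not_dvd hi hi', sPerm_apply_of_not_dvd hi hi']

theorem sPerm_mul_self (hn : 2 ≤ n) (i : ℤ) : sPerm n i * sPerm n i = 1 :=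
  Equiv.ext (sPerm_involutive hn i)

theorem sPerm_inv (hn : 2 ≤ n) (i : ℤ) : (sPerm n i)⁻¹ = sPerm n i :=
  inv_eq_of_mul_eq_one_right (sPerm_mul_self hn i)

theorem eq_add_one_of_sPerm_lt_sPerm (hxy : x < y)
    (h : sPerm n i y < sPerm n i x) : y = x + 1 ∧ (n : ℤ) ∣ x - i := by
  have hx := sPerm_apply_mem_Icc n i x
  have hy := sPerm_apply_mem_Icc n i y
  rw [Set.mem_Icc] at hx hy
  refine ⟨by omega, by_contra fun hi => ?_⟩
  have hsx : sPerm n i x ≤ x := by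
    rw [sPerm_apply, if_neg hi]
    split_ifs <;> omega
  omega

theorem sPerm_lt_sPerm (hxy : x < y) (h : ¬ (y = x + 1 ∧ (n : ℤ) ∣ x - i)) :
    sPerm n i x < sPerm n i y :=
  ((sPerm n i).injective.ne hxy.ne).lt_or_gt.resolve_right
    fun h' => h (eq_add_one_of_sPerm_lt_sPerm hxy h')

theorem sPerm_mem_Ico (hn : 2 ≤ n) (hx : x ∈ Set.Ico i (i + n)) :
    sPerm n i x ∈ Set.Ico i (i + n) := by
  by_cases hi : (n : ℤ) ∣ x - i
  · rw [eq_of_mem_Ico_of_dvd_sub hx hi, sPerm_apply_self, Set.mem_Ico]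
    omega
  by_cases hi' : (n : ℤ) ∣ x - (i + 1)
  · have hxi : x ≠ i := by
      rintro rfl
      have := Int.eq_zero_of_abs_lt_dvd hi' (abs_lt.2 ⟨by omega, by omega⟩)
      omega
    rw [Set.mem_Ico] at hx
    rw [sPerm_apply_of_dvd_succ hn hi', Set.mem_Ico]
    omega
  rwa [sPerm_apply_of_not_dvd hi hi']

theorem sPerm_mem_Ico_iff (hn : 2 ≤ n) :
    sPerm n i x ∈ Set.Ico i (i + n) ↔ x ∈ Set.Ico i (i + n) :=
  ⟨fun h => sPerm_involutive hn i x ▸ sPerm_mem_Ico hn h, sPerm_mem_Ico hn⟩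

end SimpleReflection

section Involution

variable {n : ℕ} {z : Perm ℤ} {i : ℤ}

theorem ShiftEquivariant.sPerm_apply_lt_or_fixed (hz : ShiftEquivariant n z)
    (hzinv : ∀ x, z (z x) = x) (hlt : z i < z (i + 1)) :
    sPerm n i (z i) < sPerm n i (z (i + 1)) ∨ z i = i ∧ z (i + 1) = i + 1 := by
  refine or_iff_not_imp_left.2 fun hs => ?_
  obtain ⟨hsucc, hd⟩ := eq_add_one_of_sPerm_lt_sPerm hlt
    ((not_lt.1 hs).lt_of_ne ((sPerm n i).injective.ne (z.injective.ne (lt_add_one i).ne')))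
  have := hz.apply_eq_self_of_dvd hzinv hd
  omega

theorem ShiftEquivariant.mul_sPerm_eq_sPerm_mul_iff (hn : 2 ≤ n) (hz : ShiftEquivariant n z)
    (hzinv : ∀ x, z (z x) = x) (hlt : z i < z (i + 1)) :
    z * sPerm n i = sPerm n i * z ↔ z i = i ∧ z (i + 1) = i + 1 := by
  refine ⟨fun hc => (hz.sPerm_apply_lt_or_fixed hzinv hlt).resolve_left fun hs => ?_,
    fun ⟨h₀, h₁⟩ => ?_⟩
  · have e₀ := congrArg (· i) hc
    have e₁ := congrArg (· (i + 1)) hc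
    simp only [Perm.mul_apply, sPerm_apply_self, sPerm_apply_succ hn] at e₀ e₁
    omega
  · rw [sPerm, hz.mul_tPerm, h₀, h₁]

end Involution

theorem ncard_preimage_of_bijective {α β : Type*} {f : α → β} (hf : f.Bijective)
    (t : Set β) : (f ⁻¹' t).ncard = t.ncard :=
  Set.ncard_preimage_of_injective_subset_range hf.1 (by simp [hf.2.range_eq])

def inversionsFrom (n : ℕ) (w : Perm ℤ) (a : ℤ) : Set (ℤ × ℤ) :=
  {p | p.1 ∈ Set.Ico a (a + n) ∧ p.1 < p.2 ∧ w p.2 < w p.1}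

section Length

variable {n : ℕ} {w : Perm ℤ}

theorem affLen_eq_ncard_inversionsFrom_one (n : ℕ) (w : Perm ℤ) :
    affLen n w = (inversionsFrom n w 1).ncard := by
  rw [affLen, ← Nat.card_coe_set_eq]
  congr
  ext p
  simp only [inversionsFrom, Set.mem_Ico, Set.mem_ofPred_eq]
  omega

theorem ShiftEquivariant.inversionsFrom_finite (hn : 0 < n) (hw : ShiftEquivariant n w)
    (a : ℤ) : (inversionsFrom n w a).Finite := by
  obtain ⟨C, hC⟩ := hw.exists_abs_sub_le hn
  refine ((Set.finite_Icc a (a + n)).prod (Set.finite_Icc a (a + n + 2 * C))).subset ?_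
  rintro ⟨p, q⟩ ⟨hp, hpq, hinv⟩
  have hp' := abs_le.1 (hC p)
  have hq' := abs_le.1 (hC q)
  simp only [Set.mem_Ico, Set.mem_prod, Set.mem_Icc] at hp hpq hinv ⊢
  omega

/-- `τ` swaps the rows `p.1 = a` and `p.1 = a + n`, trading the window `[a, a + n)` for
`[a + 1, a + 1 + n)`. -/
theorem ShiftEquivariant.ncard_inversionsFrom_add_one (hn : 0 < n) (hw : ShiftEquivariant n w)
    (a : ℤ) : (inversionsFrom n w (a + 1)).ncard = (inversionsFrom n w a).ncard := by
  let τ : ℤ × ℤ → ℤ × ℤ := fun p =>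
    if p.1 = a then (p.1 + n, p.2 + n) else if p.1 = a + n then (p.1 - n, p.2 - n) else p
  have hτ : Function.Involutive τ := by
    rintro ⟨p, q⟩
    simp only [τ]
    split_ifs <;> simp_all
  have hshift : ∀ x, w (x - n) = w x - n := fun x => by
    have := hw (x - n)
    rw [sub_add_cancel] at this
    omega
  have key : inversionsFrom n w (a + 1) = τ ⁻¹' inversionsFrom n w a := by
    ext ⟨p, q⟩
    simp only [τ, Set.mem_preimage]
    split_ifs <;> simp only [inversionsFrom, Set.mem_ofPred_eq, Set.mem_Ico]
    · omega
    · rw [hshift, hshift]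
      omega
    · omega
  rw [key, ncard_preimage_of_bijective hτ.bijective]

theorem ShiftEquivariant.affLen_eq_ncard_inversionsFrom (hn : 0 < n)
    (hw : ShiftEquivariant n w) (a : ℤ) : affLen n w = (inversionsFrom n w a).ncard := by
  rw [affLen_eq_ncard_inversionsFrom_one]
  induction a using Int.inductionOn' (b := 1) with
  | zero => rfl
  | succ k _ ih => rw [hw.ncard_inversionsFrom_add_one hn, ih]
  | pred k _ ih => rw [ih, ← hw.ncard_inversionsFrom_add_one hn (k - 1), sub_add_cancel]

end Length

section LengthChange

variable {n : ℕ} {w : Perm ℤ}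

/-- In the window `[j, j + n)`, which `s_j` preserves, the pair `(j, j + 1)` becomes the only
new inversion. -/
theorem affLen_mul_sPerm_of_lt (hn : 2 ≤ n) (hw : ShiftEquivariant n w) {j : ℤ}
    (h : w j < w (j + 1)) : affLen n (w * sPerm n j) = affLen n w + 1 := by
  have hss := sPerm_involutive hn j
  have key : inversionsFrom n (w * sPerm n j) j =
      Prod.map (sPerm n j) (sPerm n j) ⁻¹' insert (j + 1, j) (inversionsFrom n w j) := by
    ext ⟨p, q⟩
    obtain ⟨x, rfl⟩ := (sPerm n j).surjective p
    obtain ⟨y, rfl⟩ := (sPerm n j).surjective q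
    simp only [inversionsFrom, Set.mem_preimage, Prod.map, Set.mem_insert_iff,
      Set.mem_ofPred_eq, Prod.mk.injEq, Perm.mul_apply, hss _, sPerm_mem_Ico_iff hn]
    constructor
    · rintro ⟨hx, hlt, hinv⟩
      rcases (ne_of_apply_ne _ hlt.ne).lt_or_gt with hxy | hxy
      · exact Or.inr ⟨hx, hxy, hinv⟩
      · obtain ⟨rfl, hd⟩ := eq_add_one_of_sPerm_lt_sPerm hxy hlt
        rw [Set.mem_Ico] at hx
        have := Int.eq_zero_of_abs_lt_dvd hd (abs_lt.2 ⟨by omega, by omega⟩)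
        exact Or.inl ⟨by omega, by omega⟩
    · rintro (⟨rfl, rfl⟩ | ⟨hx, hxy, hinv⟩)
      · rw [sPerm_apply_self, sPerm_apply_succ hn, Set.mem_Ico]
        exact ⟨⟨by omega, by omega⟩, by omega, h⟩
      · refine ⟨hx, sPerm_lt_sPerm hxy fun ⟨hy, hd⟩ => ?_, hinv⟩
        rw [hy, eq_of_mem_Ico_of_dvd_sub hx hd] at hinv
        exact hinv.not_gt h
  rw [(hw.mul (shiftEquivariant_sPerm n j)).affLen_eq_ncard_inversionsFrom (by omega) j,
    hw.affLen_eq_ncard_inversionsFrom (by omega) j, key,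
    ncard_preimage_of_bijective ((sPerm n j).bijective.prodMap (sPerm n j).bijective),
    Set.ncard_insert_of_notMem (by simp [inversionsFrom]) (hw.inversionsFrom_finite (by omega) j)]

/-- Count in the window starting at `w⁻¹ a`: the only new inversion is `(w⁻¹ a, w⁻¹ (a + 1))`. -/
theorem affLen_sPerm_mul_of_lt (hn : 2 ≤ n) (hw : ShiftEquivariant n w) {a : ℤ}
    (h : w⁻¹ a < w⁻¹ (a + 1)) : affLen n (sPerm n a * w) = affLen n w + 1 := by
  set y := w⁻¹ a
  set y' := w⁻¹ (a + 1)
  have hy : w y = a := by simp [y]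
  have hy' : w y' = a + 1 := by simp [y']
  have key : inversionsFrom n (sPerm n a * w) y = insert (y, y') (inversionsFrom n w y) := by
    ext ⟨p, q⟩
    simp only [inversionsFrom, Set.mem_insert_iff, Set.mem_ofPred_eq, Prod.mk.injEq,
      Perm.mul_apply]
    constructor
    · rintro ⟨hp, hpq, hlt⟩
      rcases (ne_of_apply_ne _ hlt.ne).lt_or_gt with hinv | hinv
      · exact Or.inr ⟨hp, hpq, hinv⟩
      · obtain ⟨hq, hd⟩ := eq_add_one_of_sPerm_lt_sPerm hinv hlt
        rw [← hy, hw.dvd_apply_sub_apply_iff] at hd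
        have hpy := eq_of_mem_Ico_of_dvd_sub hp hd
        refine Or.inl ⟨hpy, w.injective ?_⟩
        rw [hq, hpy, hy, hy']
    · rintro (⟨rfl, rfl⟩ | ⟨hp, hpq, hinv⟩)
      · rw [hy, hy', sPerm_apply_self, sPerm_apply_succ hn, Set.mem_Ico]
        exact ⟨⟨le_rfl, by omega⟩, h, by omega⟩
      · refine ⟨hp, hpq, sPerm_lt_sPerm hinv fun ⟨hwp, hd⟩ => ?_⟩
        rw [← hy] at hd
        have hq := hw.apply_sub_apply_of_dvd (hw.dvd_apply_sub_apply_iff.1 hd)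
        have hp' := hw.apply_sub_apply_of_dvd (x := p) (y := y')
          (hw.dvd_apply_sub_apply_iff.1 (by rwa [hwp, hy', add_sub_add_right_eq_sub, ← hy]))
        omega
  rw [(shiftEquivariant_sPerm n a).mul hw |>.affLen_eq_ncard_inversionsFrom (by omega) y,
    hw.affLen_eq_ncard_inversionsFrom (by omega) y, key,
    Set.ncard_insert_of_notMem (by simp [inversionsFrom, hy, hy'])
      (hw.inversionsFrom_finite (by omega) y)]

theorem affLen_mul_sPerm_of_gt (hn : 2 ≤ n) (hw : ShiftEquivariant n w) {j : ℤ}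
    (h : w (j + 1) < w j) : affLen n (w * sPerm n j) + 1 = affLen n w := by
  have := affLen_mul_sPerm_of_lt hn (hw.mul (shiftEquivariant_sPerm n j)) (j := j)
    (by simpa [sPerm_apply_self, sPerm_apply_succ hn] using h)
  rwa [mul_assoc, sPerm_mul_self hn, mul_one, eq_comm] at this

theorem affLen_sPerm_mul_of_gt (hn : 2 ≤ n) (hw : ShiftEquivariant n w) {a : ℤ}
    (h : w⁻¹ (a + 1) < w⁻¹ a) : affLen n (sPerm n a * w) + 1 = affLen n w := by
  have := affLen_sPerm_mul_of_lt hn ((shiftEquivariant_sPerm n a).mul hw) (a := a)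
    (by simpa [mul_inv_rev, sPerm_inv hn, sPerm_apply_self, sPerm_apply_succ hn] using h)
  rwa [← mul_assoc, sPerm_mul_self hn, one_mul, eq_comm] at this

theorem affLen_mul_sPerm_le (hn : 2 ≤ n) (hw : ShiftEquivariant n w) (j : ℤ) :
    affLen n (w * sPerm n j) ≤ affLen n w + 1 := by
  rcases (w.injective.ne (lt_add_one j).ne).lt_or_gt with h | h
  · exact (affLen_mul_sPerm_of_lt hn hw h).le
  · have := affLen_mul_sPerm_of_gt hn hw h
    omega

end LengthChange

namespace IsAffine

variable {n : ℕ} {u v w : Perm ℤ}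

theorem shiftEquivariant (hw : IsAffine n w) : ShiftEquivariant n w := hw.1

theorem mul (hn : 0 < n) (hu : IsAffine n u) (hv : IsAffine n v) : IsAffine n (u * v) := by
  refine ⟨hu.shiftEquivariant.mul hv.shiftEquivariant, ?_⟩
  calc ∑ i ∈ Finset.Icc 1 (n : ℤ), ((u * v) i - i)
      = ∑ i ∈ Finset.Icc 1 (n : ℤ), ((u (v i) - v i) + (v i - i)) := by simp
    _ = 0 := by
      rw [Finset.sum_add_distrib, hv.shiftEquivariant.sum_comp hn hu.shiftEquivariant.periodic,
        hu.2, hv.2, add_zero]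

theorem eq_one_of_strictMono (hn : 0 < n) (hw : IsAffine n w) (hmono : StrictMono w) :
    w = 1 := by
  have hsucc : ∀ x, w (x + 1) = w x + 1 := fun x => by
    simpa [Order.succ_eq_add_one] using (hmono.orderIsoOfSurjective w w.surjective).map_succ x
  have hconst : ∀ x, w x - x = w 0 := fun x => by
    have hp : Function.Periodic (fun x => w x - x) 1 := fun x => by simp [hsucc]
    simpa using hp.int_mul_eq x
  have h0 : w 0 = 0 := by
    have := hw.2
    simp only [hconst, Finset.sum_const, Int.card_Icc] at this
    simpa [hn.ne'] using this
  ext x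
  simpa [h0, sub_eq_zero] using hconst x

theorem exists_apply_add_one_lt (hn : 0 < n) (hw : IsAffine n w) (h : w ≠ 1) :
    ∃ j, w (j + 1) < w j := by
  by_contra! hmono
  exact h (hw.eq_one_of_strictMono hn
    (strictMono_int_of_lt_succ fun j => (hmono j).lt_of_ne (w.injective.ne (lt_add_one j).ne)))

end IsAffine

theorem isAffine_sPerm {n : ℕ} (hn : 2 ≤ n) (i : ℤ) : IsAffine n (sPerm n i) := by
  let g : ℤ → ℤ := fun x => if (n : ℤ) ∣ x - i then 1 else 0
  have hg : Function.Periodic g n := fun x => by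
    simp only [g, add_sub_right_comm x (n : ℤ), dvd_add_self_right]
  have hs : ∀ x, sPerm n i x - x = g x - g (x - 1) := fun x => by
    simp only [g, sub_sub, add_comm 1 i]
    by_cases hi : (n : ℤ) ∣ x - i
    · rw [sPerm_apply_of_dvd hi, if_pos hi, if_neg (not_dvd_sub_add_one_of_dvd hn hi)]
      ring
    by_cases hi' : (n : ℤ) ∣ x - (i + 1)
    · rw [sPerm_apply_of_dvd_succ hn hi', if_neg hi, if_pos hi']
      ring
    · rw [sPerm_apply_of_not_dvd hi hi', if_neg hi, if_neg hi']
      ring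
  have hshift : ShiftEquivariant n (Equiv.subRight 1) := fun x => by simp [sub_add_eq_add_sub]
  refine ⟨shiftEquivariant_sPerm n i, ?_⟩
  rw [Finset.sum_congr rfl fun x _ => hs x, Finset.sum_sub_distrib]
  have := hshift.sum_comp (by omega) hg
  simp only [Equiv.subRight_apply] at this
  rw [this, sub_self]

namespace IsDemazure

variable {n : ℕ} {D : Perm ℤ → Perm ℤ → Perm ℤ} {w : Perm ℤ}

theorem mul_sPerm_of_lt (hn : 2 ≤ n) (hD : IsDemazure n D) (hw : IsAffine n w) {j : ℤ}
    (h : w j < w (j + 1)) : D w (sPerm n j) = w * sPerm n j :=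
  (hD.2.2.2 w hw j).2 (by rw [affLen_mul_sPerm_of_lt hn hw.shiftEquivariant h]; omega)

theorem mul_sPerm_of_gt (hn : 2 ≤ n) (hD : IsDemazure n D) (hw : IsAffine n w) {j : ℤ}
    (h : w (j + 1) < w j) : D w (sPerm n j) = w :=
  (hD.2.2.2 w hw j).1 (by have := affLen_mul_sPerm_of_gt hn hw.shiftEquivariant h; omega)

/-- Induction on `ℓ(w)`: write `w = u s_j` with `ℓ(u) < ℓ(w)`, so that
`s_a ∘ w = (s_a ∘ u) ∘ s_j`. -/
theorem sPerm_mul_of_lt (hn : 2 ≤ n) (hD : IsDemazure n D) (hw : IsAffine n w) {a : ℤ}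
    (h : w⁻¹ a < w⁻¹ (a + 1)) : D (sPerm n a) w = sPerm n a * w := by
  induction hk : affLen n w using Nat.strong_induction_on generalizing w with
  | _ k ih =>
  have hsa := isAffine_sPerm hn a
  by_cases hw1 : w = 1
  · rw [hw1, mul_one]
    exact (hD.2.2.1 _ hsa).1
  obtain ⟨j, hj⟩ := hw.exists_apply_add_one_lt (by omega) hw1
  set u := w * sPerm n j
  have hu : IsAffine n u := hw.mul (by omega) (isAffine_sPerm hn j)
  have hus : u * sPerm n j = w := by rw [mul_assoc, sPerm_mul_self hn, mul_one]
  have hDus : D u (sPerm n j) = w := by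
    rw [hD.mul_sPerm_of_lt hn hu (by simpa [u, sPerm_apply_self, sPerm_apply_succ hn] using hj),
      hus]
  have hℓu : affLen n u + 1 = affLen n w := affLen_mul_sPerm_of_gt hn hw.shiftEquivariant hj
  have hℓsw := affLen_sPerm_mul_of_lt hn hw.shiftEquivariant h
  have hsus : sPerm n a * u * sPerm n j = sPerm n a * w := by rw [mul_assoc, hus]
  have hsu := hsa.mul (by omega) hu
  have hassoc : D (sPerm n a) w = D (D (sPerm n a) u) (sPerm n j) := by
    rw [hD.1 _ _ _ hsa hu (isAffine_sPerm hn j), hDus]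
  rw [hassoc]
  rcases (u⁻¹.injective.ne (lt_add_one a).ne).lt_or_gt with hlt | hgt
  · rw [ih (affLen n u) (by omega) hu hlt rfl, ← hsus]
    refine (hD.2.2.2 _ hsu j).2 ?_
    rw [hsus, hℓsw, affLen_sPerm_mul_of_lt hn hu.shiftEquivariant hlt]
    omega
  · have := affLen_sPerm_mul_of_gt hn hu.shiftEquivariant hgt
    have := affLen_mul_sPerm_le hn hsu.shiftEquivariant j
    rw [hsus] at this
    omega

/-- Writing `w = s_a v`, associativity gives `s_a ∘ w = (s_a ∘ s_a) ∘ v = s_a ∘ v = w`. -/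
theorem sPerm_mul_of_gt (hn : 2 ≤ n) (hD : IsDemazure n D) (hw : IsAffine n w) {a : ℤ}
    (h : w⁻¹ (a + 1) < w⁻¹ a) : D (sPerm n a) w = w := by
  have hsa := isAffine_sPerm hn a
  set v := sPerm n a * w
  have hv : IsAffine n v := hsa.mul (by omega) hw
  have hv_lt : v⁻¹ a < v⁻¹ (a + 1) := by
    simpa [v, mul_inv_rev, sPerm_inv hn, sPerm_apply_self, sPerm_apply_succ hn] using h
  have hDv : D (sPerm n a) v = w := by
    rw [hD.sPerm_mul_of_lt hn hv hv_lt, ← mul_assoc, sPerm_mul_self hn, one_mul]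
  have hDss : D (sPerm n a) (sPerm n a) = sPerm n a :=
    hD.mul_sPerm_of_gt hn hsa (by rw [sPerm_apply_self, sPerm_apply_succ hn]; omega)
  rw [← hDv, ← hD.1 _ _ _ hsa hsa hv, hDss]

end IsDemazure

/-- Demazure conjugation formula: for `z ∈ Ĩ_n` and `i ∈ ℤ`,
`s_i ∘ z ∘ s_i = s_i z s_i` if `z i < z (i+1)` and `z s_i ≠ s_i z`;
`s_i ∘ z ∘ s_i = z s_i` if `z i < z (i+1)` and `z s_i = s_i z`;
`s_i ∘ z ∘ s_i = z` if `z i > z (i+1)`.  Moreover, when `z i < z (i+1)`,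
`z s_i = s_i z` if and only if both `i` and `i+1` are fixed points of `z`. -/
theorem demazure_conjugation (n : ℕ) (hn : 2 ≤ n)
    (D : Equiv.Perm ℤ → Equiv.Perm ℤ → Equiv.Perm ℤ) (hD : IsDemazure n D)
    (z : Equiv.Perm ℤ) (hz : IsAffine n z) (hzinv : ∀ x : ℤ, z (z x) = x) (i : ℤ) :
    (z i < z (i + 1) → z * sPerm n i ≠ sPerm n i * z →
      D (D (sPerm n i) z) (sPerm n i) = sPerm n i * z * sPerm n i) ∧
    (z i < z (i + 1) → z * sPerm n i = sPerm n i * z →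
      D (D (sPerm n i) z) (sPerm n i) = z * sPerm n i) ∧
    (z (i + 1) < z i → D (D (sPerm n i) z) (sPerm n i) = z) ∧
    (z i < z (i + 1) →
      (z * sPerm n i = sPerm n i * z ↔ z i = i ∧ z (i + 1) = i + 1)) := by
  have hz_inv : z⁻¹ = z := inv_eq_of_mul_eq_one_right (Equiv.ext hzinv)
  have hsz : IsAffine n (sPerm n i * z) := (isAffine_sPerm hn i).mul (by omega) hz
  have hcomm := hz.shiftEquivariant.mul_sPerm_eq_sPerm_mul_iff hn hzinv (i := i)
  refine ⟨fun hlt hc => ?_, fun hlt hc => ?_, fun hgt => ?_, hcomm⟩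
  · rw [hD.sPerm_mul_of_lt hn hz (by rwa [hz_inv]), hD.mul_sPerm_of_lt hn hsz]
    exact (hz.shiftEquivariant.sPerm_apply_lt_or_fixed hzinv hlt).resolve_right
      (hc ∘ (hcomm hlt).2)
  · obtain ⟨h₀, h₁⟩ := (hcomm hlt).1 hc
    rw [hD.sPerm_mul_of_lt hn hz (by rwa [hz_inv]), hD.mul_sPerm_of_gt hn hsz, hc]
    simp [h₀, h₁, sPerm_apply_self, sPerm_apply_succ hn]
  · rw [hD.sPerm_mul_of_gt hn hz (by rwa [hz_inv]), hD.mul_sPerm_of_gt hn hz hgt]
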